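/- arXiv:2205.12355 — 3 statements merged into one kernel-verified Lean document; each statement's English description precedes it below -/
import Mathlib

section
/- (Tempered α-stable branching mechanism; formula (5.2).) For every α ∈ (1,2), θ > 0, C > 0 and every u ≤ θ: ∫_{(0,∞)} (e^{u·x} − 1 − u·x) · C · x^{−1−α} · e^{−θ·x} dx = C · Γ(−α) · ((θ − u)^α − θ^α + α·θ^{α−1}·u). -/
open MeasureTheory Real Set Filter



lemma aux_bound {f g : ℝ → ℝ} {s : Set ℝ} (hs : MeasurableSet s)
    (hg : IntegrableOn g s) (hf : AEStronglyMeasurable f (volume.restrict s))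
    (hb : ∀ x ∈ s, |f x| ≤ g x) : IntegrableOn f s :=
  hg.mono' hf ((ae_restrict_iff' hs).2 (ae_of_all _ (by simpa using hb)))

lemma contOn_rpow (c : ℝ) : ContinuousOn (fun x : ℝ => x ^ c) (Ioi 0) :=
  fun x hx => (Real.continuousAt_rpow_const x c (Or.inl (ne_of_gt hx))).continuousWithinAt

lemma int_rpow_Ioc {r : ℝ} (h : -1 < r) : IntegrableOn (fun x : ℝ => x ^ r) (Ioc 0 1) :=
  (intervalIntegrable_iff_integrableOn_Ioc_of_le zero_le_one).mp
    (intervalIntegral.intervalIntegrable_rpow' h)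

lemma hpow_mul {x : ℝ} (hx : 0 < x) (c : ℝ) : x * x ^ c = x ^ (1 + c) := by
  rw [Real.rpow_add hx, Real.rpow_one]

lemma exp_quad_bound {y : ℝ} (hy : 0 ≤ y) : Real.exp (-y) - 1 + y ≤ y ^ 2 / 2 := by
  have h := Real.quadratic_le_exp_of_nonneg hy
  have hexp : Real.exp (-y) * Real.exp y = 1 := by rw [← Real.exp_add]; simp
  nlinarith [Real.exp_pos y, Real.exp_pos (-y), sq_nonneg y, sq_nonneg (y*y)]

lemma integrable2 {s β : ℝ} (hs : 0 < s) (hβ1 : 0 < β) (hβ2 : β < 1) :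
    IntegrableOn (fun x : ℝ => (1 - Real.exp (-(s*x))) * x ^ (-1-β)) (Ioi 0) := by
  have hcont : ContinuousOn (fun x : ℝ => (1 - Real.exp (-(s*x))) * x ^ (-1-β)) (Ioi 0) :=
    ((continuous_const.sub (Real.continuous_exp.comp ((continuous_const.mul continuous_id).neg))).continuousOn).mul (contOn_rpow _)
  rw [← Ioc_union_Ioi_eq_Ioi (zero_le_one (α := ℝ))]
  refine IntegrableOn.union ?_ ?_
  · refine aux_bound measurableSet_Ioc ((int_rpow_Ioc (r := -β) (by linarith)).const_mul s)
      ((hcont.mono Ioc_subset_Ioi_self).aestronglyMeasurable measurableSet_Ioc) ?_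
    intro x hx
    have hx0 : 0 < x := hx.1
    have h1 : (0:ℝ) ≤ 1 - Real.exp (-(s*x)) := by
      nlinarith [Real.exp_le_one_iff.mpr (neg_nonpos.mpr (by positivity : (0:ℝ) ≤ s*x))]
    have h2 : 1 - Real.exp (-(s*x)) ≤ s*x := by nlinarith [Real.add_one_le_exp (-(s*x))]
    have hp : (0:ℝ) ≤ x ^ (-1-β) := (Real.rpow_pos_of_pos hx0 _).le
    rw [abs_of_nonneg (mul_nonneg h1 hp)]
    calc (1 - Real.exp (-(s*x))) * x ^ (-1-β) ≤ (s*x) * x ^ (-1-β) :=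
          mul_le_mul_of_nonneg_right h2 hp
      _ = s * x ^ (-β) := by
          rw [mul_assoc, hpow_mul hx0, show (1 + (-1 - β)) = -β by ring]
  · refine aux_bound measurableSet_Ioi (integrableOn_Ioi_rpow_of_lt (by linarith : -1-β < -1) one_pos)
      ((hcont.mono (Ioi_subset_Ioi zero_le_one)).aestronglyMeasurable measurableSet_Ioi) ?_
    intro x hx
    have hx0 : (0:ℝ) < x := lt_trans one_pos hx
    have h1 : (0:ℝ) ≤ 1 - Real.exp (-(s*x)) := by
      nlinarith [Real.exp_le_one_iff.mpr (neg_nonpos.mpr (by positivity : (0:ℝ) ≤ s*x))]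
    have h2 : 1 - Real.exp (-(s*x)) ≤ 1 := by nlinarith [Real.exp_pos (-(s*x))]
    have hp : (0:ℝ) ≤ x ^ (-1-β) := (Real.rpow_pos_of_pos hx0 _).le
    rw [abs_of_nonneg (mul_nonneg h1 hp)]
    nlinarith [mul_le_mul_of_nonneg_right h2 hp]

lemma integrable3 {s α : ℝ} (hs : 0 < s) (hα1 : 1 < α) (hα2 : α < 2) :
    IntegrableOn (fun x : ℝ => (Real.exp (-(s*x)) - 1 + s*x) * x ^ (-1-α)) (Ioi 0) := by
  have hcont : ContinuousOn (fun x : ℝ => (Real.exp (-(s*x)) - 1 + s*x) * x ^ (-1-α)) (Ioi 0) :=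
    ((((Real.continuous_exp.comp ((continuous_const.mul continuous_id).neg)).sub
      continuous_const).add (continuous_const.mul continuous_id)).continuousOn).mul (contOn_rpow _)
  have hquad : ∀ y : ℝ, 0 ≤ y → Real.exp (-y) - 1 + y ≤ y ^ 2 / 2 := by
    intro y hy
    have h := Real.quadratic_le_exp_of_nonneg hy
    have hexp : Real.exp (-y) * Real.exp y = 1 := by rw [← Real.exp_add]; simp
    nlinarith [Real.exp_pos y, Real.exp_pos (-y), sq_nonneg y, sq_nonneg (y*y)]
  have hlow : ∀ y : ℝ, 0 ≤ Real.exp (-y) - 1 + y := by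
    intro y; nlinarith [Real.add_one_le_exp (-y)]
  rw [← Ioc_union_Ioi_eq_Ioi (zero_le_one (α := ℝ))]
  refine IntegrableOn.union ?_ ?_
  · refine aux_bound measurableSet_Ioc ((int_rpow_Ioc (r := 1-α) (by linarith)).const_mul (s^2/2))
      ((hcont.mono Ioc_subset_Ioi_self).aestronglyMeasurable measurableSet_Ioc) ?_
    intro x hx
    have hx0 : 0 < x := hx.1
    have hp : (0:ℝ) ≤ x ^ (-1-α) := (Real.rpow_pos_of_pos hx0 _).le
    rw [abs_of_nonneg (mul_nonneg (hlow (s*x)) hp)]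
    calc (Real.exp (-(s*x)) - 1 + s*x) * x ^ (-1-α) ≤ ((s*x)^2/2) * x ^ (-1-α) :=
          mul_le_mul_of_nonneg_right (hquad (s*x) (by positivity)) hp
      _ = s^2/2 * x ^ (1-α) := by
          rw [show ((s*x)^2/2) = s^2/2 * (x * x) by ring, mul_assoc, mul_assoc,
            hpow_mul hx0, show (1 + (-1-α)) = -α by ring, hpow_mul hx0,
            show (1 + -α) = 1-α by ring]
  · refine aux_bound measurableSet_Ioi
      ((integrableOn_Ioi_rpow_of_lt (by linarith : -α < -1) one_pos).const_mul s)
      ((hcont.mono (Ioi_subset_Ioi zero_le_one)).aestronglyMeasurable measurableSet_Ioi) ?_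
    intro x hx
    have hx0 : (0:ℝ) < x := lt_trans one_pos hx
    have hp : (0:ℝ) ≤ x ^ (-1-α) := (Real.rpow_pos_of_pos hx0 _).le
    have h2 : Real.exp (-(s*x)) - 1 + s*x ≤ s*x := by
      nlinarith [Real.exp_le_one_iff.mpr (neg_nonpos.mpr (by positivity : (0:ℝ) ≤ s*x))]
    rw [abs_of_nonneg (mul_nonneg (hlow (s*x)) hp)]
    calc (Real.exp (-(s*x)) - 1 + s*x) * x ^ (-1-α) ≤ (s*x) * x ^ (-1-α) :=
          mul_le_mul_of_nonneg_right h2 hp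
      _ = s * x ^ (-α) := by
          rw [mul_assoc, hpow_mul hx0, show (1 + (-1-α)) = -α by ring]

lemma integrableExp {s β : ℝ} (hs : 0 < s) (hβ1 : 0 < β) (hβ2 : β < 1) :
    IntegrableOn (fun x : ℝ => x ^ (-β) * Real.exp (-(s*x))) (Ioi 0) := by
  have hcont : ContinuousOn (fun x : ℝ => x ^ (-β) * Real.exp (-(s*x))) (Ioi 0) :=
    (contOn_rpow _).mul
      (Real.continuous_exp.comp ((continuous_const.mul continuous_id).neg)).continuousOn
  rw [← Ioc_union_Ioi_eq_Ioi (zero_le_one (α := ℝ))]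
  refine IntegrableOn.union ?_ ?_
  · refine aux_bound measurableSet_Ioc (int_rpow_Ioc (r := -β) (by linarith))
      ((hcont.mono Ioc_subset_Ioi_self).aestronglyMeasurable measurableSet_Ioc) ?_
    intro x hx
    have hx0 : 0 < x := hx.1
    have hp : (0:ℝ) ≤ x ^ (-β) := (Real.rpow_pos_of_pos hx0 _).le
    rw [abs_of_nonneg (mul_nonneg hp (Real.exp_pos _).le)]
    nlinarith [Real.exp_le_one_iff.mpr (neg_nonpos.mpr (by positivity : (0:ℝ) ≤ s*x)),
      Real.exp_pos (-(s*x))]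
  · refine aux_bound measurableSet_Ioi (exp_neg_integrableOn_Ioi 1 hs)
      ((hcont.mono (Ioi_subset_Ioi zero_le_one)).aestronglyMeasurable measurableSet_Ioi) ?_
    intro x hx
    have hx0 : (0:ℝ) < x := lt_trans one_pos hx
    have h1 : x ^ (-β) ≤ 1 := Real.rpow_le_one_of_one_le_of_nonpos hx.le (by linarith)
    have hp : (0:ℝ) ≤ x ^ (-β) := (Real.rpow_pos_of_pos hx0 _).le
    rw [abs_of_nonneg (mul_nonneg hp (Real.exp_pos _).le), neg_mul]
    nlinarith [Real.exp_pos (-(s*x))]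

-- derivative helpers
lemma hasderiv_exp_neg (s x : ℝ) :
    HasDerivAt (fun y : ℝ => Real.exp (-(s*y))) (-s * Real.exp (-(s*x))) x := by
  have h1 : HasDerivAt (fun y : ℝ => -(s*y)) (-s) x := by
    simpa [Pi.neg_def] using ((hasDerivAt_id x).const_mul s).neg
  simpa [mul_comm, Function.comp_def] using (Real.hasDerivAt_exp (-(s*x))).comp x h1

lemma hasderiv_v {c x : ℝ} (hc : c ≠ 0) (hx : x ≠ 0) :
    HasDerivAt (fun y : ℝ => y ^ (-c) / (-c)) (x ^ (-1-c)) x := by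
  have h := (Real.hasDerivAt_rpow_const (x := x) (p := -c) (Or.inl hx)).div_const (-c)
  have : -c * x ^ (-c - 1) / -c = x ^ (-1-c) := by
    rw [mul_comm, mul_div_assoc, div_self (neg_ne_zero.mpr hc), mul_one,
      show (-c-1) = -1-c by ring]
  rwa [this] at h

lemma tendsto_rpow_zero_right {p : ℝ} (hp : 0 < p) :
    Tendsto (fun x : ℝ => x ^ p) (nhdsWithin 0 (Ioi 0)) (nhds 0) := by
  have h := (Real.continuousAt_rpow_const 0 p (Or.inr hp.le)).continuousWithinAt (s := Ioi 0)
  simpa [ContinuousWithinAt, Real.zero_rpow hp.ne'] using h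

lemma tendsto_exp_neg_mul_atTop {s : ℝ} (hs : 0 < s) :
    Tendsto (fun x : ℝ => Real.exp (-(s*x))) atTop (nhds 0) :=
  Real.tendsto_exp_atBot.comp (tendsto_neg_atTop_atBot.comp (tendsto_id.const_mul_atTop hs))

lemma lemma2 {s β : ℝ} (hs : 0 < s) (hβ1 : 0 < β) (hβ2 : β < 1) :
    ∫ x in Ioi (0:ℝ), (1 - Real.exp (-(s*x))) * x ^ (-1-β) = -Real.Gamma (-β) * s ^ β := by
  have hβ0 : β ≠ 0 := hβ1.ne'
  have hβ0n : (-β : ℝ) ≠ 0 := neg_ne_zero.mpr hβ0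
  have hu : ∀ x ∈ Ioi (0:ℝ), HasDerivAt (fun y => 1 - Real.exp (-(s*y)))
      ((fun y => s * Real.exp (-(s*y))) x) x := by
    intro x _
    have := (hasderiv_exp_neg s x).const_sub 1
    simpa using this
  have hv : ∀ x ∈ Ioi (0:ℝ), HasDerivAt (fun y => y ^ (-β) / (-β))
      ((fun y : ℝ => y ^ (-1-β)) x) x := fun x hx => hasderiv_v hβ0 (ne_of_gt hx)
  have huv' : IntegrableOn ((fun y => 1 - Real.exp (-(s*y))) * (fun y : ℝ => y ^ (-1-β)))
      (Ioi (0:ℝ)) := integrable2 hs hβ1 hβ2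
  have hu'v : IntegrableOn ((fun y => s * Real.exp (-(s*y))) * (fun y : ℝ => y ^ (-β) / (-β)))
      (Ioi (0:ℝ)) := by
    refine ((integrableExp hs hβ1 hβ2).const_mul (s/(-β))).congr (ae_of_all _ fun x => ?_)
    simp only [Pi.mul_apply]
    ring
  have fact : ((fun y => 1 - Real.exp (-(s*y))) * (fun y : ℝ => y ^ (-β) / (-β)))
      = fun x : ℝ => ((1 - Real.exp (-(s*x))) * x ^ (-β)) / (-β) := by
    funext x; simp [Pi.mul_apply, mul_div_assoc]
  have h_zero : Tendsto ((fun y => 1 - Real.exp (-(s*y))) * (fun y : ℝ => y ^ (-β) / (-β)))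
      (nhdsWithin 0 (Ioi 0)) (nhds 0) := by
    rw [fact]
    have T1 : Tendsto (fun x : ℝ => (1 - Real.exp (-(s*x))) * x ^ (-β))
        (nhdsWithin 0 (Ioi 0)) (nhds 0) := by
      apply squeeze_zero'
      · filter_upwards [self_mem_nhdsWithin] with x hx
        have hx0 : (0:ℝ) < x := hx
        have h1 : (0:ℝ) ≤ 1 - Real.exp (-(s*x)) := by
          nlinarith [Real.exp_le_one_iff.mpr (neg_nonpos.mpr (by positivity : (0:ℝ) ≤ s*x))]
        exact mul_nonneg h1 (Real.rpow_pos_of_pos hx0 _).le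
      · filter_upwards [self_mem_nhdsWithin] with x hx
        have hx0 : (0:ℝ) < x := hx
        have h2 : 1 - Real.exp (-(s*x)) ≤ s*x := by nlinarith [Real.add_one_le_exp (-(s*x))]
        calc (1 - Real.exp (-(s*x))) * x ^ (-β) ≤ (s*x) * x ^ (-β) :=
              mul_le_mul_of_nonneg_right h2 (Real.rpow_pos_of_pos hx0 _).le
          _ = s * x ^ (1-β) := by
              rw [mul_assoc, hpow_mul hx0, show (1 + (-β)) = 1-β by ring]
      · have := (tendsto_rpow_zero_right (p := 1-β) (by linarith)).const_mul s
        simpa using this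
    have := T1.div_const (-β)
    simpa using this
  have h_infty : Tendsto ((fun y => 1 - Real.exp (-(s*y))) * (fun y : ℝ => y ^ (-β) / (-β)))
      atTop (nhds 0) := by
    rw [fact]
    have T1 : Tendsto (fun x : ℝ => (1 - Real.exp (-(s*x))) * x ^ (-β)) atTop (nhds 0) := by
      have := (tendsto_const_nhds (x := (1:ℝ)).sub (tendsto_exp_neg_mul_atTop hs)).mul
        (tendsto_rpow_neg_atTop hβ1)
      simpa using this
    simpa using T1.div_const (-β)
  have key := integral_Ioi_mul_deriv_eq_deriv_mul hu hv huv' hu'v h_zero h_infty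
  rw [key]
  have hI : (∫ x in Ioi (0:ℝ), (s * Real.exp (-(s*x))) * (x ^ (-β) / (-β)))
      = (s/(-β)) * ((1/s) ^ (1-β) * Real.Gamma (1-β)) := by
    have heq : EqOn (fun x : ℝ => (s * Real.exp (-(s*x))) * (x ^ (-β) / (-β)))
        (fun x : ℝ => (s/(-β)) * (x ^ ((1-β)-1) * Real.exp (-(s*x)))) (Ioi 0) := by
      intro x _
      rw [show (1-β)-1 = -β by ring]; ring
    rw [setIntegral_congr_fun measurableSet_Ioi heq, integral_const_mul,
      Real.integral_rpow_mul_exp_neg_mul_Ioi (by linarith : (0:ℝ) < 1-β) hs]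
  rw [hI, show (1-β : ℝ) = -β + 1 by ring, Real.Gamma_add_one hβ0n]
  have hP2 : s ^ β * s ^ (-β+1) = s := by
    rw [← Real.rpow_add hs]; norm_num
  have hone : (1/s : ℝ) ^ (-β+1) = 1 / s ^ (-β+1) := by
    rw [Real.div_rpow zero_le_one hs.le, Real.one_rpow]
  have hpos : (0:ℝ) < s ^ (-β+1) := Real.rpow_pos_of_pos hs _
  have final : ∀ P Q G : ℝ, P ≠ 0 → Q * P = s → 0 - 0 - s / -β * (1/P * (-β * G)) = -G * Q := by
    intro P Q G hP0 hQP
    field_simp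
    linear_combination G * hQP
  rw [hone]
  exact final _ _ _ hpos.ne' hP2

lemma lemma3 {s α : ℝ} (hs : 0 ≤ s) (hα1 : 1 < α) (hα2 : α < 2) :
    ∫ x in Ioi (0:ℝ), (Real.exp (-(s*x)) - 1 + s*x) * x ^ (-1-α) = Real.Gamma (-α) * s ^ α := by
  have hα0 : (α:ℝ) ≠ 0 := by positivity
  rcases eq_or_lt_of_le hs with h0 | hpos
  · rw [← h0]
    simp [Real.zero_rpow hα0]
  have hβ1 : (0:ℝ) < α - 1 := by linarith
  have hβ2 : α - 1 < 1 := by linarith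
  have hu : ∀ x ∈ Ioi (0:ℝ), HasDerivAt (fun y => Real.exp (-(s*y)) - 1 + s*y)
      ((fun y => s * (1 - Real.exp (-(s*y)))) x) x := by
    intro x _
    have h : HasDerivAt (fun y => Real.exp (-(s*y)) - 1 + s*y) (-s * Real.exp (-(s*x)) + s * 1) x :=
      ((hasderiv_exp_neg s x).sub_const 1).add ((hasDerivAt_id x).const_mul s)
    convert h using 1
    ring
  have hv : ∀ x ∈ Ioi (0:ℝ), HasDerivAt (fun y => y ^ (-α) / (-α))
      ((fun y : ℝ => y ^ (-1-α)) x) x := fun x hx => hasderiv_v hα0 (ne_of_gt hx)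
  have huv' : IntegrableOn ((fun y => Real.exp (-(s*y)) - 1 + s*y) * (fun y : ℝ => y ^ (-1-α)))
      (Ioi (0:ℝ)) := integrable3 hpos hα1 hα2
  have hu'v : IntegrableOn ((fun y => s * (1 - Real.exp (-(s*y)))) * (fun y : ℝ => y ^ (-α) / (-α)))
      (Ioi (0:ℝ)) := by
    refine ((integrable2 hpos hβ1 hβ2).const_mul (s/(-α))).congr (ae_of_all _ fun x => ?_)
    simp only [Pi.mul_apply]
    rw [show (-1-(α-1) : ℝ) = -α by ring]
    ring
  have fact : ((fun y => Real.exp (-(s*y)) - 1 + s*y) * (fun y : ℝ => y ^ (-α) / (-α)))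
      = fun x : ℝ => ((Real.exp (-(s*x)) - 1 + s*x) * x ^ (-α)) / (-α) := by
    funext x; simp [Pi.mul_apply, mul_div_assoc]
  have hlow : ∀ y : ℝ, 0 ≤ Real.exp (-y) - 1 + y := by
    intro y; nlinarith [Real.add_one_le_exp (-y)]
  have h_zero : Tendsto ((fun y => Real.exp (-(s*y)) - 1 + s*y) * (fun y : ℝ => y ^ (-α) / (-α)))
      (nhdsWithin 0 (Ioi 0)) (nhds 0) := by
    rw [fact]
    have T1 : Tendsto (fun x : ℝ => (Real.exp (-(s*x)) - 1 + s*x) * x ^ (-α))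
        (nhdsWithin 0 (Ioi 0)) (nhds 0) := by
      apply squeeze_zero'
      · filter_upwards [self_mem_nhdsWithin] with x hx
        exact mul_nonneg (hlow (s*x)) (Real.rpow_pos_of_pos hx _).le
      · filter_upwards [self_mem_nhdsWithin] with x hx
        have hx0 : (0:ℝ) < x := hx
        have hq : Real.exp (-(s*x)) - 1 + s*x ≤ (s*x)^2/2 :=
          exp_quad_bound (by positivity : (0:ℝ) ≤ s*x)
        calc (Real.exp (-(s*x)) - 1 + s*x) * x ^ (-α) ≤ ((s*x)^2/2) * x ^ (-α) :=
              mul_le_mul_of_nonneg_right hq (Real.rpow_pos_of_pos hx0 _).le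
          _ = s^2/2 * x ^ (2-α) := by
              rw [show ((s*x)^2/2) = s^2/2 * (x * x) by ring, mul_assoc, mul_assoc,
                hpow_mul hx0, show (1 + -α) = 1-α by ring, hpow_mul hx0,
                show (1 + (1-α)) = 2-α by ring]
      · have := (tendsto_rpow_zero_right (p := 2-α) (by linarith)).const_mul (s^2/2)
        simpa using this
    simpa using T1.div_const (-α)
  have h_infty : Tendsto ((fun y => Real.exp (-(s*y)) - 1 + s*y) * (fun y : ℝ => y ^ (-α) / (-α)))
      atTop (nhds 0) := by
    rw [fact]
    have T1 : Tendsto (fun x : ℝ => (Real.exp (-(s*x)) - 1 + s*x) * x ^ (-α)) atTop (nhds 0) := by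
      apply squeeze_zero'
      · filter_upwards [eventually_gt_atTop (0:ℝ)] with x hx
        exact mul_nonneg (hlow (s*x)) (Real.rpow_pos_of_pos hx _).le
      · filter_upwards [eventually_gt_atTop (0:ℝ)] with x hx
        have h2 : Real.exp (-(s*x)) - 1 + s*x ≤ s*x := by
          nlinarith [Real.exp_le_one_iff.mpr (neg_nonpos.mpr (by positivity : (0:ℝ) ≤ s*x))]
        calc (Real.exp (-(s*x)) - 1 + s*x) * x ^ (-α) ≤ (s*x) * x ^ (-α) :=
              mul_le_mul_of_nonneg_right h2 (Real.rpow_pos_of_pos hx _).le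
          _ = s * x ^ (-(α-1)) := by
              rw [mul_assoc, hpow_mul hx, show (1 + -α) = -(α-1) by ring]
      · have := (tendsto_rpow_neg_atTop hβ1).const_mul s
        simpa using this
    simpa using T1.div_const (-α)
  have key := integral_Ioi_mul_deriv_eq_deriv_mul hu hv huv' hu'v h_zero h_infty
  rw [key]
  have hI : (∫ x in Ioi (0:ℝ), (s * (1 - Real.exp (-(s*x)))) * (x ^ (-α) / (-α)))
      = (s/(-α)) * (-Real.Gamma (-(α-1)) * s ^ (α-1)) := by
    have heq : EqOn (fun x : ℝ => (s * (1 - Real.exp (-(s*x)))) * (x ^ (-α) / (-α)))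
        (fun x : ℝ => (s/(-α)) * ((1 - Real.exp (-(s*x))) * x ^ (-1-(α-1)))) (Ioi 0) := by
      intro x _
      simp only
      rw [show (-1-(α-1) : ℝ) = -α by ring]
      ring
    rw [setIntegral_congr_fun measurableSet_Ioi heq, integral_const_mul, lemma2 hpos hβ1 hβ2]
  rw [hI, show (-(α-1):ℝ) = -α + 1 by ring,
    Real.Gamma_add_one (neg_ne_zero.mpr hα0)]
  have hP2 : s * s ^ (α-1) = s ^ α := by
    rw [hpow_mul hpos, show (1 + (α-1)) = α by ring]
  have final : ∀ Q G : ℝ, 0 - 0 - (s/(-α)) * (-(-α * G) * Q) = G * (s * Q) := by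
    intro Q G
    field_simp
    ring
  rw [← hP2]
  exact final _ _

lemma integrable3' {s α : ℝ} (hs : 0 ≤ s) (hα1 : 1 < α) (hα2 : α < 2) :
    IntegrableOn (fun x : ℝ => (Real.exp (-(s*x)) - 1 + s*x) * x ^ (-1-α)) (Ioi 0) := by
  rcases eq_or_lt_of_le hs with h0 | hpos
  · rw [← h0]
    simp only [zero_mul, neg_zero, Real.exp_zero, sub_self, zero_add]
    simpa using integrableOn_zero (s := Ioi (0:ℝ)) (μ := volume)
  · exact integrable3 hpos hα1 hα2

/-- tempered α-stable branching mechanism, formula (5.2):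
for `α ∈ (1,2)`, `θ > 0`, `C > 0` and `u ≤ θ`,
`∫_{(0,∞)} (e^{ux} - 1 - ux) C x^{-1-α} e^{-θx} dx
  = C Γ(-α) ((θ-u)^α - θ^α + α θ^{α-1} u)`. -/
theorem statement12 (α θ C u : ℝ) (hα1 : 1 < α) (hα2 : α < 2)
    (hθ : 0 < θ) (hC : 0 < C) (hu : u ≤ θ) :
    ∫ x in Set.Ioi (0 : ℝ),
        (Real.exp (u * x) - 1 - u * x) * (C * x ^ (-1 - α) * Real.exp (-θ * x)) =
      C * Real.Gamma (-α) * ((θ - u) ^ α - θ ^ α + α * θ ^ (α - 1) * u) := by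
  have hα0 : (α:ℝ) ≠ 0 := by positivity
  set s := θ - u with hsdef
  have hs0 : 0 ≤ s := by simp [hsdef]; linarith
  have hβ1 : (0:ℝ) < α - 1 := by linarith
  have hβ2 : α - 1 < 1 := by linarith
  have heq : EqOn (fun x : ℝ => (Real.exp (u*x) - 1 - u*x) * (C * x ^ (-1-α) * Real.exp (-θ*x)))
      (fun x : ℝ => C * ((Real.exp (-(s*x)) - 1 + s*x) * x ^ (-1-α))
        - C * ((Real.exp (-(θ*x)) - 1 + θ*x) * x ^ (-1-α))
        + (C*u) * ((1 - Real.exp (-(θ*x))) * x ^ (-1-(α-1)))) (Ioi 0) := by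
    intro x hx
    have hx0 : (0:ℝ) < x := hx
    simp only
    have hexp : Real.exp (u*x) * Real.exp (-θ*x) = Real.exp (-(s*x)) := by
      rw [← Real.exp_add]; congr 1; rw [hsdef]; ring
    rw [show (-1-(α-1):ℝ) = 1 + (-1-α) by ring, ← hpow_mul hx0, ← hexp]
    have h2 : Real.exp (-(θ*x)) = Real.exp (-θ*x) := by rw [neg_mul]
    rw [h2]
    ring
  rw [setIntegral_congr_fun measurableSet_Ioi heq]
  have iA := integrable3' hs0 hα1 hα2
  have iB := integrable3' (le_of_lt hθ) hα1 hα2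
  have iD := integrable2 hθ hβ1 hβ2
  have iA' : IntegrableOn (fun x : ℝ => C * ((Real.exp (-(s*x)) - 1 + s*x) * x ^ (-1-α)))
      (Ioi 0) := iA.const_mul C
  have iB' : IntegrableOn (fun x : ℝ => C * ((Real.exp (-(θ*x)) - 1 + θ*x) * x ^ (-1-α)))
      (Ioi 0) := iB.const_mul C
  have iAB : IntegrableOn (fun x : ℝ => C * ((Real.exp (-(s*x)) - 1 + s*x) * x ^ (-1-α))
      - C * ((Real.exp (-(θ*x)) - 1 + θ*x) * x ^ (-1-α))) (Ioi 0) := iA'.sub iB'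
  have iD' : IntegrableOn (fun x : ℝ => (C*u) * ((1 - Real.exp (-(θ*x))) * x ^ (-1-(α-1))))
      (Ioi 0) := iD.const_mul (C*u)
  rw [integral_add iAB iD', integral_sub iA' iB',
    integral_const_mul, integral_const_mul, integral_const_mul,
    lemma3 hs0 hα1 hα2, lemma3 (le_of_lt hθ) hα1 hα2, lemma2 hθ hβ1 hβ2,
    show (-(α-1):ℝ) = -α+1 by ring, Real.Gamma_add_one (neg_ne_zero.mpr hα0)]
  ring
end

section
/- (Lévy exponent of the CGMY process.) For every Y ∈ (1,2), M > 0, G > 0 and every u ∈ [−G, M]: ∫_{(0,∞)} (e^{u·z} − 1 − u·z) · z^{−1−Y} · e^{−M·z} dz + ∫_{(0,∞)} (e^{−u·z} − 1 + u·z) · z^{−1−Y} · e^{−G·z} dz = Γ(−Y) · ((M − u)^Y − M^Y + (G + u)^Y − G^Y + u·Y·(M^{Y−1} − G^{Y−1})). Equivalently, with normalization C_Y = 1/Γ(−Y), the CGMY exponent is Ξ(u) = (M−u)^Y − M^Y + (G+u)^Y − G^Y + u·Y·(M^{Y−1} − G^{Y−1}). -/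
open MeasureTheory Real Set

section CGMYAux
open Filter Topology

lemma aux_exp_nonneg {x : ℝ} : 0 ≤ Real.exp (-x) - 1 + x := by
  have := Real.add_one_le_exp (-x); linarith

lemma aux_one_sub_exp_le {x : ℝ} : 1 - Real.exp (-x) ≤ x := by
  have := Real.add_one_le_exp (-x); linarith

lemma aux_one_sub_exp_nonneg {x : ℝ} (hx : 0 ≤ x) : 0 ≤ 1 - Real.exp (-x) := by
  have : Real.exp (-x) ≤ 1 := Real.exp_le_one_iff.mpr (by linarith)
  linarith

lemma aux_exp_quad {x : ℝ} (hx : 0 ≤ x) : Real.exp (-x) - 1 + x ≤ x ^ 2 / 2 := by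
  set g : ℝ → ℝ := fun x => x ^ 2 / 2 - (Real.exp (-x) - 1 + x) with hg
  have hd : ∀ y : ℝ, HasDerivAt g (y - 1 + Real.exp (-y)) y := by
    intro y
    have h1 : HasDerivAt (fun y : ℝ => Real.exp (-y)) (-Real.exp (-y)) y := by
      simpa using ((hasDerivAt_id y).neg).exp
    have h2 : HasDerivAt (fun y : ℝ => y ^ 2 / 2) y y := by
      simpa using ((hasDerivAt_pow 2 y).div_const 2)
    have := (h2.sub ((h1.sub_const 1).add (hasDerivAt_id y)))
    exact this.congr_deriv (by ring)
  have hmono : MonotoneOn g (Set.Ici 0) := by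
    apply monotoneOn_of_deriv_nonneg (convex_Ici 0)
    · exact (fun y _ => (hd y).differentiableAt.continuousAt.continuousWithinAt)
    · exact fun y _ => (hd y).differentiableAt.differentiableWithinAt
    · intro y hy
      rw [(hd y).deriv]
      have := Real.add_one_le_exp (-y); linarith
  have := hmono (Set.self_mem_Ici) hx hx
  simp [hg] at this; linarith

-- continuity helper
lemma contOn_rpow_s14 (p : ℝ) : ContinuousOn (fun z : ℝ => z ^ p) (Set.Ioi 0) :=
  fun z hz => (Real.continuousAt_rpow_const z p (Or.inl (ne_of_gt hz))).continuousWithinAt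

lemma meas_h (c Y : ℝ) :
    AEStronglyMeasurable (fun z : ℝ => (Real.exp (-(c * z)) - 1 + c * z) * z ^ (-1 - Y))
      (volume.restrict (Set.Ioi 0)) := by
  apply ContinuousOn.aestronglyMeasurable _ measurableSet_Ioi
  exact (((Real.continuous_exp.comp (continuous_const.mul continuous_id).neg).sub
    continuous_const).add (continuous_const.mul continuous_id)).continuousOn.mul (contOn_rpow_s14 _)

lemma meas_k (c Y : ℝ) :
    AEStronglyMeasurable (fun z : ℝ => (1 - Real.exp (-(c * z))) * z ^ (-Y))
      (volume.restrict (Set.Ioi 0)) := by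
  apply ContinuousOn.aestronglyMeasurable _ measurableSet_Ioi
  exact (continuous_const.sub
    (Real.continuous_exp.comp (continuous_const.mul continuous_id).neg)).continuousOn.mul
    (contOn_rpow_s14 _)

lemma int_rpow_Ioc_s14 {p : ℝ} (hp : -1 < p) : IntegrableOn (fun z : ℝ => z ^ p) (Set.Ioc 0 1) := by
  have := intervalIntegral.intervalIntegrable_rpow' (a := 0) (b := 1) hp
  rwa [intervalIntegrable_iff_integrableOn_Ioc_of_le zero_le_one] at this

lemma int_h {Y : ℝ} (c : ℝ) (hY1 : 1 < Y) (hY2 : Y < 2) (hc : 0 ≤ c) :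
    IntegrableOn (fun z : ℝ => (Real.exp (-(c * z)) - 1 + c * z) * z ^ (-1 - Y))
      (Set.Ioi 0) := by
  have hsplit : Set.Ioc (0:ℝ) 1 ∪ Set.Ioi 1 = Set.Ioi 0 := Set.Ioc_union_Ioi_eq_Ioi zero_le_one
  rw [← hsplit]
  apply MeasureTheory.IntegrableOn.union
  · -- near 0 : bound by (c^2/2) z^(1-Y)
    apply Integrable.mono' ((int_rpow_Ioc_s14 (p := 1 - Y) (by linarith)).const_mul (c ^ 2 / 2))
    · exact (meas_h c Y).mono_measure (Measure.restrict_mono Set.Ioc_subset_Ioi_self le_rfl)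
    · filter_upwards [ae_restrict_mem measurableSet_Ioc] with z hz
      have hz0 : 0 < z := hz.1
      have h1 : 0 ≤ Real.exp (-(c * z)) - 1 + c * z := aux_exp_nonneg
      have h2 : Real.exp (-(c * z)) - 1 + c * z ≤ (c * z) ^ 2 / 2 :=
        aux_exp_quad (by positivity)
      rw [Real.norm_of_nonneg (mul_nonneg h1 (Real.rpow_nonneg hz0.le _))]
      have hrw : z ^ 2 * z ^ (-1 - Y) = z ^ (1 - Y) := by
        rw [← Real.rpow_natCast z 2, ← Real.rpow_add hz0]; ring_nf
      calc (Real.exp (-(c * z)) - 1 + c * z) * z ^ (-1 - Y)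
          ≤ (c * z) ^ 2 / 2 * z ^ (-1 - Y) := by
            apply mul_le_mul_of_nonneg_right h2 (Real.rpow_nonneg hz0.le _)
        _ = c ^ 2 / 2 * (z ^ 2 * z ^ (-1 - Y)) := by ring
        _ = c ^ 2 / 2 * z ^ (1 - Y) := by rw [hrw]
  · -- near ∞ : bound by c * z^(-Y)
    apply Integrable.mono' ((integrableOn_Ioi_rpow_of_lt (a := -Y) (by linarith) one_pos).const_mul c)
    · exact (meas_h c Y).mono_measure (Measure.restrict_mono (Set.Ioi_subset_Ioi zero_le_one) le_rfl)
    · filter_upwards [ae_restrict_mem measurableSet_Ioi] with z hz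
      have hz0 : 0 < z := lt_trans one_pos hz
      have h1 : 0 ≤ Real.exp (-(c * z)) - 1 + c * z := aux_exp_nonneg
      have h2 : Real.exp (-(c * z)) - 1 + c * z ≤ c * z := by
        have : Real.exp (-(c * z)) ≤ 1 := Real.exp_le_one_iff.mpr (neg_nonpos.mpr (by positivity))
        linarith
      rw [Real.norm_of_nonneg (mul_nonneg h1 (Real.rpow_nonneg hz0.le _))]
      have hrw : z * z ^ (-1 - Y) = z ^ (-Y) := by
        nth_rewrite 1 [← Real.rpow_one z]
        rw [← Real.rpow_add hz0]; ring_nf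
      calc (Real.exp (-(c * z)) - 1 + c * z) * z ^ (-1 - Y)
          ≤ c * z * z ^ (-1 - Y) := mul_le_mul_of_nonneg_right h2 (Real.rpow_nonneg hz0.le _)
        _ = c * (z * z ^ (-1 - Y)) := by ring
        _ = c * z ^ (-Y) := by rw [hrw]

lemma int_k {Y : ℝ} (c : ℝ) (hY1 : 1 < Y) (hY2 : Y < 2) (hc : 0 ≤ c) :
    IntegrableOn (fun z : ℝ => (1 - Real.exp (-(c * z))) * z ^ (-Y)) (Set.Ioi 0) := by
  have hsplit : Set.Ioc (0:ℝ) 1 ∪ Set.Ioi 1 = Set.Ioi 0 := Set.Ioc_union_Ioi_eq_Ioi zero_le_one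
  rw [← hsplit]
  apply MeasureTheory.IntegrableOn.union
  · apply Integrable.mono' ((int_rpow_Ioc_s14 (p := 1 - Y) (by linarith)).const_mul c)
    · exact (meas_k c Y).mono_measure (Measure.restrict_mono Set.Ioc_subset_Ioi_self le_rfl)
    · filter_upwards [ae_restrict_mem measurableSet_Ioc] with z hz
      have hz0 : 0 < z := hz.1
      have h1 : 0 ≤ 1 - Real.exp (-(c * z)) := aux_one_sub_exp_nonneg (by positivity)
      rw [Real.norm_of_nonneg (mul_nonneg h1 (Real.rpow_nonneg hz0.le _))]
      have hrw : z * z ^ (-Y) = z ^ (1 - Y) := by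
        nth_rewrite 1 [← Real.rpow_one z]
        rw [← Real.rpow_add hz0]; ring_nf
      calc (1 - Real.exp (-(c * z))) * z ^ (-Y)
          ≤ c * z * z ^ (-Y) :=
            mul_le_mul_of_nonneg_right aux_one_sub_exp_le (Real.rpow_nonneg hz0.le _)
        _ = c * (z * z ^ (-Y)) := by ring
        _ = c * z ^ (1 - Y) := by rw [hrw]
  · apply Integrable.mono' (integrableOn_Ioi_rpow_of_lt (a := -Y) (by linarith) one_pos)
    · exact (meas_k c Y).mono_measure (Measure.restrict_mono (Set.Ioi_subset_Ioi zero_le_one) le_rfl)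
    · filter_upwards [ae_restrict_mem measurableSet_Ioi] with z hz
      have hz0 : 0 < z := lt_trans one_pos hz
      have h1 : 0 ≤ 1 - Real.exp (-(c * z)) := aux_one_sub_exp_nonneg (by positivity)
      have h2 : 1 - Real.exp (-(c * z)) ≤ 1 := by
        have := Real.exp_pos (-(c*z)); linarith
      rw [Real.norm_of_nonneg (mul_nonneg h1 (Real.rpow_nonneg hz0.le _))]
      nth_rewrite 2 [← one_mul (z ^ (-Y))]
      exact mul_le_mul_of_nonneg_right h2 (Real.rpow_nonneg hz0.le _)

lemma int_exp_rpow {Y : ℝ} (c : ℝ) (hY2 : Y < 2) (hc : 0 < c) :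
    IntegrableOn (fun z : ℝ => Real.exp (-(c * z)) * z ^ (1 - Y)) (Set.Ioi 0) := by
  have := integrableOn_rpow_mul_exp_neg_mul_rpow (p := 1) (s := 1 - Y) (b := c)
    (by linarith) one_pos hc
  apply this.congr_fun _ measurableSet_Ioi
  intro z hz
  simp only [Real.rpow_one]; ring
lemma gamma_int {Y : ℝ} (hY2 : Y < 2) {c : ℝ} (hc0 : 0 < c) :
    ∫ z in Set.Ioi (0:ℝ), Real.exp (-(c * z)) * z ^ (1 - Y)
      = (1 / c) ^ (2 - Y) * Real.Gamma (2 - Y) := by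
  rw [← Real.integral_rpow_mul_exp_neg_mul_Ioi (by linarith : (0:ℝ) < 2 - Y) hc0]
  apply setIntegral_congr_fun measurableSet_Ioi
  intro z hz
  simp only
  rw [show (2 - Y) - 1 = 1 - Y by ring]
  ring

lemma K_val {Y : ℝ} (hY1 : 1 < Y) (hY2 : Y < 2) {c : ℝ} (hc : 0 ≤ c) :
    ∫ z in Set.Ioi (0:ℝ), (1 - Real.exp (-(c * z))) * z ^ (-Y)
      = Real.Gamma (2 - Y) / (Y - 1) * c ^ (Y - 1) := by
  rcases hc.eq_or_lt with h | hc0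
  · subst h
    simp [Real.zero_rpow (show Y - 1 ≠ 0 by linarith)]
  have hY0 : (1:ℝ) - Y ≠ 0 := by linarith
  have hY0' : Y - 1 ≠ 0 := by linarith
  -- antiderivative
  set g : ℝ → ℝ := fun x => (1 - Real.exp (-(c * x))) * x ^ (1 - Y) / (1 - Y) with hgdef
  have hderiv : ∀ x ∈ Set.Ioi (0:ℝ), HasDerivAt g
      (c / (1 - Y) * (Real.exp (-(c * x)) * x ^ (1 - Y))
        + (1 - Real.exp (-(c * x))) * x ^ (-Y)) x := by
    intro x hx
    have h1 : HasDerivAt (fun x : ℝ => 1 - Real.exp (-(c * x))) (c * Real.exp (-(c * x))) x := by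
      have h0 : HasDerivAt (fun x : ℝ => -(c * x)) (-c) x := by
        exact ((hasDerivAt_id x).const_mul c).neg.congr_deriv (by simp)
      have := (h0.exp).const_sub 1
      exact this.congr_deriv (by ring)
    have h2 : HasDerivAt (fun x : ℝ => x ^ (1 - Y)) ((1 - Y) * x ^ (-Y)) x := by
      have := Real.hasDerivAt_rpow_const (p := 1 - Y) (Or.inl (ne_of_gt (mem_Ioi.mp hx)))
      convert this using 2; ring
    have := (h1.mul h2).div_const (1 - Y)
    refine this.congr_deriv (Eq.symm ?_)
    field_simp
  have hcont : ContinuousWithinAt g (Set.Ici 0) 0 := by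
    have hg0 : g 0 = 0 := by simp [hgdef]
    rw [ContinuousWithinAt, hg0]
    apply squeeze_zero_norm' (a := fun x => c / (Y - 1) * x ^ (2 - Y))
    · filter_upwards [self_mem_nhdsWithin] with x (hx : x ∈ Set.Ici 0)
      rcases (Set.mem_Ici.mp hx).eq_or_lt with h | hx0
      · subst h
        simp [hgdef, Real.zero_rpow (show (1:ℝ) - Y ≠ 0 by linarith),
          Real.zero_rpow (show (2:ℝ) - Y ≠ 0 by linarith)]
      have h1 : 0 ≤ 1 - Real.exp (-(c * x)) := aux_one_sub_exp_nonneg (by positivity)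
      have h2 : 1 - Real.exp (-(c * x)) ≤ c * x := aux_one_sub_exp_le
      have hrw : x * x ^ (1 - Y) = x ^ (2 - Y) := by
        nth_rewrite 1 [← Real.rpow_one x]
        rw [← Real.rpow_add hx0]; ring_nf
      have hnorm : ‖g x‖ = (1 - Real.exp (-(c * x))) * x ^ (1 - Y) / (Y - 1) := by
        rw [hgdef]
        simp only
        rw [norm_div, Real.norm_of_nonneg (mul_nonneg h1 (Real.rpow_nonneg hx0.le _)),
          Real.norm_of_nonpos (by linarith : (1:ℝ) - Y ≤ 0)]
        rw [show -(1 - Y) = Y - 1 by ring]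
      rw [hnorm]
      rw [div_le_iff₀ (by linarith : (0:ℝ) < Y - 1)]
      calc (1 - Real.exp (-(c * x))) * x ^ (1 - Y)
          ≤ c * x * x ^ (1 - Y) :=
            mul_le_mul_of_nonneg_right h2 (Real.rpow_nonneg hx0.le _)
        _ = c * (x * x ^ (1 - Y)) := by ring
        _ = c * x ^ (2 - Y) := by rw [hrw]
        _ = c / (Y - 1) * x ^ (2 - Y) * (Y - 1) := by field_simp
    · have hc2 : ContinuousAt (fun x : ℝ => x ^ (2 - Y)) 0 :=
        Real.continuousAt_rpow_const 0 (2 - Y) (Or.inr (by linarith))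
      have h3 : Tendsto (fun x : ℝ => c / (Y - 1) * x ^ (2 - Y)) (𝓝[Set.Ici 0] 0)
          (𝓝 (c / (Y - 1) * 0 ^ (2 - Y))) :=
        Tendsto.const_mul _ (hc2.tendsto.mono_left nhdsWithin_le_nhds)
      simpa [Real.zero_rpow (show (2:ℝ) - Y ≠ 0 by linarith)] using h3
  have htop : Tendsto g atTop (𝓝 0) := by
    apply squeeze_zero_norm' (a := fun x => (1 / (Y - 1)) * x ^ (-(Y - 1)))
    · filter_upwards [eventually_gt_atTop 0] with x hx0
      have h1 : 0 ≤ 1 - Real.exp (-(c * x)) := aux_one_sub_exp_nonneg (by positivity)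
      have h3 : 1 - Real.exp (-(c * x)) ≤ 1 := by
        have := Real.exp_pos (-(c * x)); linarith
      have hnorm : ‖g x‖ = (1 - Real.exp (-(c * x))) * x ^ (1 - Y) / (Y - 1) := by
        rw [hgdef]
        simp only
        rw [norm_div, Real.norm_of_nonneg (mul_nonneg h1 (Real.rpow_nonneg hx0.le _)),
          Real.norm_of_nonpos (by linarith : (1:ℝ) - Y ≤ 0)]
        rw [show -(1 - Y) = Y - 1 by ring]
      rw [hnorm, div_le_iff₀ (by linarith : (0:ℝ) < Y - 1),
        show -(Y - 1) = 1 - Y by ring]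
      calc (1 - Real.exp (-(c * x))) * x ^ (1 - Y)
          ≤ 1 * x ^ (1 - Y) :=
            mul_le_mul_of_nonneg_right h3 (Real.rpow_nonneg hx0.le _)
        _ = 1 / (Y - 1) * x ^ (1 - Y) * (Y - 1) := by field_simp
    · simpa using (tendsto_rpow_neg_atTop (by linarith : (0:ℝ) < Y - 1)).const_mul (1 / (Y - 1))
  have hint : IntegrableOn (fun x : ℝ =>
      c / (1 - Y) * (Real.exp (-(c * x)) * x ^ (1 - Y))
        + (1 - Real.exp (-(c * x))) * x ^ (-Y)) (Set.Ioi 0) :=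
    ((int_exp_rpow c hY2 hc0).const_mul (c / (1 - Y))).add (int_k c hY1 hY2 hc)
  have hftc := integral_Ioi_of_hasDerivAt_of_tendsto hcont hderiv hint htop
  rw [integral_add ((int_exp_rpow c hY2 hc0).const_mul (c / (1 - Y))) (int_k c hY1 hY2 hc),
    integral_const_mul, gamma_int hY2 hc0] at hftc
  have hg0 : g 0 = 0 := by simp [hgdef]
  rw [hg0] at hftc
  -- rpow algebra
  have hc1 : (1 / c) ^ (2 - Y) = c ^ (Y - 2) := by
    rw [one_div, Real.inv_rpow hc0.le, ← Real.rpow_neg hc0.le,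
      show -(2 - Y) = Y - 2 by ring]
  rw [hc1] at hftc
  have hc2 : c ^ (Y - 1) = c ^ (Y - 2) * c := by
    rw [show Y - 1 = (Y - 2) + 1 by ring, Real.rpow_add_one hc0.ne']
  rw [hc2]
  have h := hftc
  field_simp at h ⊢
  linarith [h]

lemma H_val {Y : ℝ} (hY1 : 1 < Y) (hY2 : Y < 2) {c : ℝ} (hc : 0 ≤ c) :
    ∫ z in Set.Ioi (0:ℝ), (Real.exp (-(c * z)) - 1 + c * z) * z ^ (-1 - Y)
      = Real.Gamma (2 - Y) / (Y * (Y - 1)) * c ^ Y := by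
  rcases hc.eq_or_lt with h | hc0
  · subst h
    simp [Real.zero_rpow (show Y ≠ 0 by linarith)]
  have hY0' : Y - 1 ≠ 0 := by linarith
  have hYne : Y ≠ 0 := by linarith
  set f : ℝ → ℝ := fun x => (Real.exp (-(c * x)) - 1 + c * x) * x ^ (-Y) / (-Y) with hfdef
  have hderiv : ∀ x ∈ Set.Ioi (0:ℝ), HasDerivAt f
      (c / (-Y) * ((1 - Real.exp (-(c * x))) * x ^ (-Y))
        + (Real.exp (-(c * x)) - 1 + c * x) * x ^ (-1 - Y)) x := by
    intro x hx
    have h1 : HasDerivAt (fun x : ℝ => Real.exp (-(c * x)) - 1 + c * x)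
        (c * (1 - Real.exp (-(c * x)))) x := by
      have h0 : HasDerivAt (fun x : ℝ => -(c * x)) (-c) x := by
        exact ((hasDerivAt_id x).const_mul c).neg.congr_deriv (by simp)
      have := (h0.exp.sub_const 1).add ((hasDerivAt_id x).const_mul c)
      exact this.congr_deriv (by ring)
    have h2 : HasDerivAt (fun x : ℝ => x ^ (-Y)) ((-Y) * x ^ (-1 - Y)) x := by
      have := Real.hasDerivAt_rpow_const (p := -Y) (Or.inl (ne_of_gt (mem_Ioi.mp hx)))
      convert this using 2; ring
    have := (h1.mul h2).div_const (-Y)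
    refine this.congr_deriv (Eq.symm ?_)
    field_simp
    ring
  have hcont : ContinuousWithinAt f (Set.Ici 0) 0 := by
    have hf0 : f 0 = 0 := by simp [hfdef]
    rw [ContinuousWithinAt, hf0]
    apply squeeze_zero_norm' (a := fun x => c ^ 2 / (2 * Y) * x ^ (2 - Y))
    · filter_upwards [self_mem_nhdsWithin] with x (hx : x ∈ Set.Ici 0)
      rcases (Set.mem_Ici.mp hx).eq_or_lt with h | hx0
      · subst h
        simp [hfdef, Real.zero_rpow (show -Y ≠ 0 by simpa using hYne),
          Real.zero_rpow (show (2:ℝ) - Y ≠ 0 by linarith)]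
      have h1 : 0 ≤ Real.exp (-(c * x)) - 1 + c * x := aux_exp_nonneg
      have h2 : Real.exp (-(c * x)) - 1 + c * x ≤ (c * x) ^ 2 / 2 :=
        aux_exp_quad (by positivity)
      have hrw : x ^ 2 * x ^ (-Y) = x ^ (2 - Y) := by
        rw [← Real.rpow_natCast x 2, ← Real.rpow_add hx0]; ring_nf
      have hnorm : ‖f x‖ = (Real.exp (-(c * x)) - 1 + c * x) * x ^ (-Y) / Y := by
        rw [hfdef]
        simp only
        rw [norm_div, Real.norm_of_nonneg (mul_nonneg h1 (Real.rpow_nonneg hx0.le _)),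
          Real.norm_of_nonpos (by linarith : -Y ≤ 0)]
        rw [show -(-Y) = Y by ring]
      rw [hnorm, div_le_iff₀ (by linarith : (0:ℝ) < Y)]
      calc (Real.exp (-(c * x)) - 1 + c * x) * x ^ (-Y)
          ≤ (c * x) ^ 2 / 2 * x ^ (-Y) :=
            mul_le_mul_of_nonneg_right h2 (Real.rpow_nonneg hx0.le _)
        _ = c ^ 2 / 2 * (x ^ 2 * x ^ (-Y)) := by ring
        _ = c ^ 2 / 2 * x ^ (2 - Y) := by rw [hrw]
        _ = c ^ 2 / (2 * Y) * x ^ (2 - Y) * Y := by field_simp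
    · have hc2 : ContinuousAt (fun x : ℝ => x ^ (2 - Y)) 0 :=
        Real.continuousAt_rpow_const 0 (2 - Y) (Or.inr (by linarith))
      have h3 : Tendsto (fun x : ℝ => c ^ 2 / (2 * Y) * x ^ (2 - Y)) (𝓝[Set.Ici 0] 0)
          (𝓝 (c ^ 2 / (2 * Y) * 0 ^ (2 - Y))) :=
        Tendsto.const_mul _ (hc2.tendsto.mono_left nhdsWithin_le_nhds)
      simpa [Real.zero_rpow (show (2:ℝ) - Y ≠ 0 by linarith)] using h3
  have htop : Tendsto f atTop (𝓝 0) := by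
    apply squeeze_zero_norm' (a := fun x => (c / Y) * x ^ (-(Y - 1)))
    · filter_upwards [eventually_gt_atTop 0] with x hx0
      have h1 : 0 ≤ Real.exp (-(c * x)) - 1 + c * x := aux_exp_nonneg
      have h3 : Real.exp (-(c * x)) - 1 + c * x ≤ c * x := by
        have : Real.exp (-(c * x)) ≤ 1 := Real.exp_le_one_iff.mpr
          (neg_nonpos.mpr (by positivity))
        linarith
      have hrw : x * x ^ (-Y) = x ^ (1 - Y) := by
        nth_rewrite 1 [← Real.rpow_one x]
        rw [← Real.rpow_add hx0]; ring_nf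
      have hnorm : ‖f x‖ = (Real.exp (-(c * x)) - 1 + c * x) * x ^ (-Y) / Y := by
        rw [hfdef]
        simp only
        rw [norm_div, Real.norm_of_nonneg (mul_nonneg h1 (Real.rpow_nonneg hx0.le _)),
          Real.norm_of_nonpos (by linarith : -Y ≤ 0)]
        rw [show -(-Y) = Y by ring]
      rw [hnorm, div_le_iff₀ (by linarith : (0:ℝ) < Y),
        show -(Y - 1) = 1 - Y by ring]
      calc (Real.exp (-(c * x)) - 1 + c * x) * x ^ (-Y)
          ≤ c * x * x ^ (-Y) :=
            mul_le_mul_of_nonneg_right h3 (Real.rpow_nonneg hx0.le _)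
        _ = c * (x * x ^ (-Y)) := by ring
        _ = c * x ^ (1 - Y) := by rw [hrw]
        _ = c / Y * x ^ (1 - Y) * Y := by field_simp
    · simpa using (tendsto_rpow_neg_atTop (by linarith : (0:ℝ) < Y - 1)).const_mul (c / Y)
  have hint : IntegrableOn (fun x : ℝ =>
      c / (-Y) * ((1 - Real.exp (-(c * x))) * x ^ (-Y))
        + (Real.exp (-(c * x)) - 1 + c * x) * x ^ (-1 - Y)) (Set.Ioi 0) :=
    ((int_k c hY1 hY2 hc).const_mul (c / (-Y))).add (int_h c hY1 hY2 hc)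
  have hftc := integral_Ioi_of_hasDerivAt_of_tendsto hcont hderiv hint htop
  rw [integral_add ((int_k c hY1 hY2 hc).const_mul (c / (-Y))) (int_h c hY1 hY2 hc),
    integral_const_mul, K_val hY1 hY2 hc] at hftc
  have hf0 : f 0 = 0 := by simp [hfdef]
  rw [hf0] at hftc
  have hc2 : c ^ (Y - 1) * c = c ^ Y := by
    rw [← Real.rpow_add_one hc0.ne' (Y - 1)]; norm_num
  rw [← hc2]
  have h := hftc
  field_simp at h ⊢
  linarith [h]

end CGMYAux

/-- Lévy exponent of the CGMY process: for `Y ∈ (1,2)`, `M > 0`, `G > 0`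
and `u ∈ [-G, M]`,
`∫_{(0,∞)} (e^{uz} - 1 - uz) z^{-1-Y} e^{-Mz} dz
  + ∫_{(0,∞)} (e^{-uz} - 1 + uz) z^{-1-Y} e^{-Gz} dz
  = Γ(-Y) ((M-u)^Y - M^Y + (G+u)^Y - G^Y + uY(M^{Y-1} - G^{Y-1}))`,
i.e., with normalization `C_Y = 1/Γ(-Y)`, the CGMY exponent is
`Ξ(u) = (M-u)^Y - M^Y + (G+u)^Y - G^Y + uY(M^{Y-1} - G^{Y-1})`. -/
theorem statement14 (Y M G u : ℝ) (hY1 : 1 < Y) (hY2 : Y < 2)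
    (hM : 0 < M) (hG : 0 < G) (hu : u ∈ Set.Icc (-G) M) :
    (∫ z in Set.Ioi (0 : ℝ),
        (Real.exp (u * z) - 1 - u * z) * (z ^ (-1 - Y) * Real.exp (-M * z))) +
    (∫ z in Set.Ioi (0 : ℝ),
        (Real.exp (-u * z) - 1 + u * z) * (z ^ (-1 - Y) * Real.exp (-G * z))) =
      Real.Gamma (-Y) *
        ((M - u) ^ Y - M ^ Y + (G + u) ^ Y - G ^ Y +
          u * Y * (M ^ (Y - 1) - G ^ (Y - 1))) := by
  have ha : 0 ≤ M - u := by linarith [hu.2]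
  have hb : 0 ≤ G + u := by linarith [hu.1]
  have hY0 : Y * (Y - 1) ≠ 0 := by
    apply mul_ne_zero <;> intro h <;> nlinarith
  -- first integral
  have he1 : ∀ z ∈ Set.Ioi (0:ℝ),
      (Real.exp (u * z) - 1 - u * z) * (z ^ (-1 - Y) * Real.exp (-M * z)) =
      ((Real.exp (-((M - u) * z)) - 1 + (M - u) * z) * z ^ (-1 - Y)
        - (Real.exp (-(M * z)) - 1 + M * z) * z ^ (-1 - Y))
        + u * ((1 - Real.exp (-(M * z))) * z ^ (-Y)) := by
    intro z hz
    have hz0 : (0:ℝ) < z := hz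
    have hzY : z ^ (-Y) = z * z ^ (-1 - Y) := by
      nth_rewrite 2 [← Real.rpow_one z]
      rw [← Real.rpow_add hz0]; ring_nf
    have hexp : Real.exp (-((M - u) * z)) = Real.exp (u * z) * Real.exp (-M * z) := by
      rw [← Real.exp_add]; congr 1; ring
    have hexp2 : Real.exp (-(M * z)) = Real.exp (-M * z) := by congr 1; ring
    rw [hexp, hexp2, hzY]; ring
  have he2 : ∀ z ∈ Set.Ioi (0:ℝ),
      (Real.exp (-u * z) - 1 + u * z) * (z ^ (-1 - Y) * Real.exp (-G * z)) =
      ((Real.exp (-((G + u) * z)) - 1 + (G + u) * z) * z ^ (-1 - Y)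
        - (Real.exp (-(G * z)) - 1 + G * z) * z ^ (-1 - Y))
        - u * ((1 - Real.exp (-(G * z))) * z ^ (-Y)) := by
    intro z hz
    have hz0 : (0:ℝ) < z := hz
    have hzY : z ^ (-Y) = z * z ^ (-1 - Y) := by
      nth_rewrite 2 [← Real.rpow_one z]
      rw [← Real.rpow_add hz0]; ring_nf
    have hexp : Real.exp (-((G + u) * z)) = Real.exp (-u * z) * Real.exp (-G * z) := by
      rw [← Real.exp_add]; congr 1; ring
    have hexp2 : Real.exp (-(G * z)) = Real.exp (-G * z) := by congr 1; ring
    rw [hexp, hexp2, hzY]; ring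
  rw [setIntegral_congr_fun measurableSet_Ioi he1,
    setIntegral_congr_fun measurableSet_Ioi he2]
  have hd1 : IntegrableOn (fun x : ℝ =>
      (Real.exp (-((M - u) * x)) - 1 + (M - u) * x) * x ^ (-1 - Y)
        - (Real.exp (-(M * x)) - 1 + M * x) * x ^ (-1 - Y)) (Set.Ioi 0) :=
    (int_h (M - u) hY1 hY2 ha).sub (int_h M hY1 hY2 hM.le)
  have hd2 : IntegrableOn (fun x : ℝ =>
      (Real.exp (-((G + u) * x)) - 1 + (G + u) * x) * x ^ (-1 - Y)
        - (Real.exp (-(G * x)) - 1 + G * x) * x ^ (-1 - Y)) (Set.Ioi 0) :=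
    (int_h (G + u) hY1 hY2 hb).sub (int_h G hY1 hY2 hG.le)
  rw [integral_add hd1 ((int_k M hY1 hY2 hM.le).const_mul u),
    integral_sub hd2 ((int_k G hY1 hY2 hG.le).const_mul u),
    integral_sub (int_h (M - u) hY1 hY2 ha) (int_h M hY1 hY2 hM.le),
    integral_sub (int_h (G + u) hY1 hY2 hb) (int_h G hY1 hY2 hG.le),
    integral_const_mul, integral_const_mul,
    H_val hY1 hY2 ha, H_val hY1 hY2 hM.le, H_val hY1 hY2 hb, H_val hY1 hY2 hG.le,
    K_val hY1 hY2 hM.le, K_val hY1 hY2 hG.le]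
  have hgam : Real.Gamma (2 - Y) = Y * (Y - 1) * Real.Gamma (-Y) := by
    rw [show (2:ℝ) - Y = (1 - Y) + 1 by ring,
      Real.Gamma_add_one (by linarith : (1:ℝ) - Y ≠ 0),
      show (1:ℝ) - Y = -Y + 1 by ring,
      Real.Gamma_add_one (by linarith : -Y ≠ 0)]
    ring
  have e1 : Real.Gamma (2 - Y) / (Y * (Y - 1)) = Real.Gamma (-Y) := by
    rw [hgam]; field_simp
    exact mul_div_cancel_left₀ _ (by linarith : Y - 1 ≠ 0)
  have e2 : Real.Gamma (2 - Y) / (Y - 1) = Y * Real.Gamma (-Y) := by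
    rw [hgam, div_eq_iff (by linarith : Y - (1:ℝ) ≠ 0)]
    ring
  rw [e1, e2]
  ring
end

section
/- (Monotone bijectivity of the tempered α-stable branching mechanism under condition (5.5).) Let α ∈ (1,2), θ > 0, C > 0, σ ≥ 0 and b ∈ ℝ with b ≥ σ²·θ + C·Γ(−α)·α·θ^{α−1}, and define Φ(u) := −b·u + (σ²/2)·u² + C·Γ(−α)·((θ − u)^α − θ^α + α·θ^{α−1}·u) for u ≤ θ. Then Φ is strictly antitone on (−∞, θ] and maps (−∞, θ] bijectively onto [Φ(θ), +∞). -/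
open MeasureTheory Real Set

/-- Bernoulli-type convexity inequality for rpow. -/
lemma stmt17_bern {α θ : ℝ} (hα : 1 ≤ α) (hθ : 0 < θ) {t : ℝ} (ht : 0 ≤ t) :
    θ ^ α + α * θ ^ (α - 1) * (t - θ) ≤ t ^ α := by
  have hs : -1 ≤ t / θ - 1 := by
    have : 0 ≤ t / θ := div_nonneg ht hθ.le
    linarith
  have h := one_add_mul_self_le_rpow_one_add hs hα
  rw [show (1 : ℝ) + (t / θ - 1) = t / θ by ring] at h
  have hdiv : (t / θ) ^ α = t ^ α / θ ^ α := Real.div_rpow ht hθ.le α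
  rw [hdiv] at h
  have hθα : 0 < θ ^ α := Real.rpow_pos_of_pos hθ α
  have hmul := mul_le_mul_of_nonneg_right h hθα.le
  rw [div_mul_cancel₀ _ hθα.ne'] at hmul
  have hθα1 : θ ^ (α - 1) * θ = θ ^ α := by
    rw [← Real.rpow_add_one hθ.ne' (α - 1), show α - 1 + 1 = α by ring]
  calc θ ^ α + α * θ ^ (α - 1) * (t - θ)
      = (1 + α * (t / θ - 1)) * θ ^ α := by
        field_simp
        linear_combination (α * (t - θ)) * hθα1
    _ ≤ t ^ α := hmul

/-- monotone bijectivity of the tempered α-stable branching mechanism under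
condition (5.5): for `α ∈ (1,2)`, `θ > 0`, `C > 0`, `σ ≥ 0` and
`b ≥ σ² θ + C Γ(-α) α θ^{α-1}`, the branching mechanism
`Φ(u) = -bu + (σ²/2)u² + C Γ(-α)((θ-u)^α - θ^α + α θ^{α-1} u)` is strictly decreasing on
`(-∞, θ]` and maps `(-∞, θ]` bijectively onto `[Φ(θ), ∞)`. -/
theorem statement17 (α θ C σ b : ℝ) (hα1 : 1 < α) (hα2 : α < 2)
    (hθ : 0 < θ) (hC : 0 < C) (hσ : 0 ≤ σ)
    (hb : σ ^ 2 * θ + C * Real.Gamma (-α) * α * θ ^ (α - 1) ≤ b)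
    (Φ : ℝ → ℝ)
    (hΦ : Φ = fun u => -b * u + σ ^ 2 / 2 * u ^ 2 +
      C * Real.Gamma (-α) * ((θ - u) ^ α - θ ^ α + α * θ ^ (α - 1) * u)) :
    StrictAntiOn Φ (Set.Iic θ) ∧ Set.BijOn Φ (Set.Iic θ) (Set.Ici (Φ θ)) := by
  -- Gamma(-α) > 0
  have hΓ : 0 < Real.Gamma (-α) := by
    have h1 : Real.Gamma (-α + 1) = (-α) * Real.Gamma (-α) :=
      Real.Gamma_add_one (by intro h; rw [neg_eq_zero] at h; linarith)
    have h2 : Real.Gamma (-α + 1 + 1) = (-α + 1) * Real.Gamma (-α + 1) :=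
      Real.Gamma_add_one (by intro h; nlinarith [h])
    have hpos : 0 < Real.Gamma (-α + 1 + 1) :=
      Real.Gamma_pos_of_pos (by linarith)
    rw [h2, h1] at hpos
    by_contra hle
    push_neg at hle
    nlinarith [hpos, mul_nonneg (by nlinarith : (0:ℝ) ≤ α * α - α) (neg_nonneg.2 hle)]
  set G : ℝ := C * Real.Gamma (-α) with hG
  have hGpos : 0 < G := mul_pos hC hΓ
  have hθα1 : 0 < θ ^ (α - 1) := Real.rpow_pos_of_pos hθ _
  have hbpos : 0 < b := by nlinarith [mul_pos (mul_pos hGpos (by linarith : (0:ℝ) < α)) hθα1, mul_nonneg (sq_nonneg σ) hθ.le]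
  -- continuity
  have hcont : Continuous Φ := by
    rw [hΦ]
    have h1 : Continuous fun u : ℝ => (θ - u) ^ α :=
      (Real.continuous_rpow_const (by linarith)).comp (continuous_const.sub continuous_id)
    continuity
  -- derivative
  have hderiv : ∀ x : ℝ, x < θ →
      HasDerivAt Φ (-b + σ ^ 2 * x + G * (α * θ ^ (α - 1) - α * (θ - x) ^ (α - 1))) x := by
    intro x hx
    have hsub : HasDerivAt (fun u : ℝ => θ - u) (-1) x := by
      simpa using (hasDerivAt_id x).const_sub θ
    have houter : HasDerivAt (fun t : ℝ => t ^ α) (α * (θ - x) ^ (α - 1)) (θ - x) :=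
      Real.hasDerivAt_rpow_const (Or.inl (sub_pos.2 hx).ne')
    have hpow : HasDerivAt (fun u : ℝ => (θ - u) ^ α) (α * (θ - x) ^ (α - 1) * (-1)) x :=
      houter.comp x hsub
    have h1 : HasDerivAt (fun u : ℝ => -b * u) (-b) x := by
      simpa using (hasDerivAt_id x).const_mul (-b)
    have h2 : HasDerivAt (fun u : ℝ => σ ^ 2 / 2 * u ^ 2) (σ ^ 2 * x) x := by
      have := ((hasDerivAt_pow 2 x).const_mul (σ ^ 2 / 2))
      refine this.congr_deriv ?_
      push_cast; ring
    have h3 : HasDerivAt (fun u : ℝ => (θ - u) ^ α - θ ^ α + α * θ ^ (α - 1) * u)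
        (α * (θ - x) ^ (α - 1) * (-1) + α * θ ^ (α - 1)) x := by
      have hlin : HasDerivAt (fun u : ℝ => α * θ ^ (α - 1) * u) (α * θ ^ (α - 1)) x := by
        simpa using (hasDerivAt_id x).const_mul (α * θ ^ (α - 1))
      exact (hpow.sub_const _).add hlin
    have := (h1.add h2).add (h3.const_mul G)
    rw [hΦ]
    refine this.congr_deriv ?_
    ring
  -- deriv is negative on the interior
  have hderivneg : ∀ x ∈ interior (Set.Iic θ), deriv Φ x < 0 := by
    intro x hx
    rw [interior_Iic] at hx
    have hx' : x < θ := hx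
    rw [(hderiv x hx').deriv]
    have hr : 0 < (θ - x) ^ (α - 1) := Real.rpow_pos_of_pos (by linarith) _
    nlinarith [mul_pos (mul_pos hGpos (by linarith : (0:ℝ) < α)) hr,
      mul_nonneg (sq_nonneg σ) (by linarith : (0:ℝ) ≤ θ - x)]
  have hanti : StrictAntiOn Φ (Set.Iic θ) :=
    strictAntiOn_of_deriv_neg (convex_Iic θ) hcont.continuousOn hderivneg
  refine ⟨hanti, ?_, hanti.injOn, ?_⟩
  · -- maps to
    intro u hu
    rcases eq_or_lt_of_le (show u ≤ θ from hu) with rfl | hlt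
    · exact mem_Ici.mpr le_rfl
    · exact mem_Ici.mpr (le_of_lt (hanti hu self_mem_Iic hlt))
  · -- surjectivity
    intro y hy
    have hy' : Φ θ ≤ y := hy
    set u₀ : ℝ := -(|y| + 1) / b with hu₀def
    have hu₀neg : u₀ < 0 := by
      apply div_neg_of_neg_of_pos _ hbpos
      have := abs_nonneg y
      linarith
    have hu₀θ : u₀ ≤ θ := by linarith
    have hΦu₀ : y ≤ Φ u₀ := by
      have hbu : -b * u₀ = |y| + 1 := by
        rw [hu₀def]; field_simp
      have hsq : 0 ≤ σ ^ 2 / 2 * u₀ ^ 2 := by positivity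
      have hbern : 0 ≤ (θ - u₀) ^ α - θ ^ α + α * θ ^ (α - 1) * u₀ := by
        have := stmt17_bern hα1.le hθ (t := θ - u₀) (by linarith)
        linarith
      have : y ≤ -b * u₀ + σ ^ 2 / 2 * u₀ ^ 2 +
          G * ((θ - u₀) ^ α - θ ^ α + α * θ ^ (α - 1) * u₀) := by
        have h1 : 0 ≤ G * ((θ - u₀) ^ α - θ ^ α + α * θ ^ (α - 1) * u₀) :=
          mul_nonneg hGpos.le hbern
        have h2 : y ≤ |y| + 1 := (le_abs_self y).trans (by linarith)
        linarith [hbu ▸ h2]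
      rw [hΦ]
      exact this
    have hmem : y ∈ Set.Icc (Φ θ) (Φ u₀) := ⟨hy', hΦu₀⟩
    have := intermediate_value_Icc' hu₀θ hcont.continuousOn hmem
    obtain ⟨x, hx, hxy⟩ := this
    exact ⟨x, hx.2, hxy⟩
end
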